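/- Let ε > 0 and let (u, m) be a classical solution of the discounted MFG system. Then m(x) > 0 for every x ∈ T^d, and ∫_{T^d} m dx = 1. -/

import Mathlib

open MeasureTheory Set

noncomputable def pd (d : ℕ) (i : Fin d) (f : (Fin d → ℝ) → ℝ) : (Fin d → ℝ) → ℝ :=
  fun x => fderiv ℝ f x (Pi.single i 1)

noncomputable def gradSq (d : ℕ) (u : (Fin d → ℝ) → ℝ) (x : Fin d → ℝ) : ℝ :=
  ∑ i, pd d i u x ^ 2

noncomputable def divUp (d : ℕ) (m u : (Fin d → ℝ) → ℝ) (x : Fin d → ℝ) : ℝ :=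
  ∑ i, pd d i (fun y => m y * pd d i u y) x

/-- `f` is `ℤ^d`-periodic, i.e. a function on the flat torus `T^d`. -/
def ZPer (d : ℕ) (f : (Fin d → ℝ) → ℝ) : Prop :=
  ∀ (x : Fin d → ℝ) (k : Fin d → ℤ), f (x + fun i => (k i : ℝ)) = f x

/-- `f` has finite `α`-Hölder seminorm. -/
def HolderSemi (α : ℝ) {E : Type*} [PseudoMetricSpace E] (f : E → ℝ) : Prop :=
  ∃ C : ℝ, 0 ≤ C ∧ ∀ x y, |f x - f y| ≤ C * dist x y ^ α

/-- `f` is of class `C^{1,α}`. -/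
def C1Hold (d : ℕ) (α : ℝ) (f : (Fin d → ℝ) → ℝ) : Prop :=
  ContDiff ℝ 1 f ∧ ∀ i, HolderSemi α (pd d i f)

/-- `f` is of class `C^{2,α}`. -/
def C2Hold (d : ℕ) (α : ℝ) (f : (Fin d → ℝ) → ℝ) : Prop :=
  ContDiff ℝ 2 f ∧ ∀ i j, HolderSemi α (pd d i (pd d j f))

/-- `f` is locally `α`-Hölder on `s`. -/
def LocHolderOn (α : ℝ) (f : ℝ → ℝ) (s : Set ℝ) : Prop :=
  ∀ K : Set ℝ, IsCompact K → K ⊆ s →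
    ∃ C : ℝ, 0 ≤ C ∧ ∀ x ∈ K, ∀ y ∈ K, |f x - f y| ≤ C * dist x y ^ α

/-- Standing hypotheses on `g`: strictly increasing and continuous on `[0,∞)`,
of class `C^{1,α}` on `(0,∞)`. -/
def Ghyp (α : ℝ) (g : ℝ → ℝ) : Prop :=
  StrictMonoOn g (Ici 0) ∧ ContinuousOn g (Ici 0) ∧
    DifferentiableOn ℝ g (Ioi 0) ∧ LocHolderOn α (deriv g) (Ioi 0)

/-- Standing hypotheses on `V`: a `C^{1,α}` function on the torus. -/
def Vhyp (d : ℕ) (α : ℝ) (V : (Fin d → ℝ) → ℝ) : Prop :=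
  ZPer d V ∧ C1Hold d α V

/-- The oscillation of `V` over the torus. -/
noncomputable def oscV (d : ℕ) (V : (Fin d → ℝ) → ℝ) : ℝ :=
  sSup (V '' Icc (0 : Fin d → ℝ) 1) - sInf (V '' Icc (0 : Fin d → ℝ) 1)

/-- Assumption (A1): `g⁻¹(g(1) − osc V) > 0`, i.e. `g(1) − osc V` is attained by `g` on `(0,∞)`. -/
def A1 (d : ℕ) (g : ℝ → ℝ) (V : (Fin d → ℝ) → ℝ) : Prop :=
  g 1 - oscV d V ∈ g '' Ioi (0 : ℝ)

/-- Assumption (A2). -/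
def A2 (g : ℝ → ℝ) : Prop :=
  ∃ C₁ C₂ β : ℝ, 0 < C₁ ∧ 0 < C₂ ∧
    (∀ z : ℝ, 0 < z → C₁ * z ^ β ≤ deriv g z) ∧
    (∀ z : ℝ, 0 ≤ z → g z ≤ C₂ + z * g z)

/-- A classical solution `(u, m)` of the discounted MFG system
`ε u + |Du|²/2 + V = g(m)`, `ε m − div(m Du) = ε` on `T^d`. -/
structure DiscSol (d : ℕ) (α : ℝ) (g : ℝ → ℝ) (V : (Fin d → ℝ) → ℝ) (ε : ℝ)
    (u m : (Fin d → ℝ) → ℝ) : Prop where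
  per_u : ZPer d u
  per_m : ZPer d m
  reg_u : C2Hold d α u
  reg_m : C1Hold d α m
  m_nonneg : ∀ x, 0 ≤ m x
  hj : ∀ x, ε * u x + (1 / 2) * gradSq d u x + V x = g (m x)
  fp : ∀ x, ε * m x - divUp d m u x = ε

/-- A classical solution `(u, m, H̄)` of the ergodic MFG system
`|Du|²/2 + V = g(m) + H̄`, `−div(m Du) = 0`, `m ≥ 0`, `∫ m = 1` on `T^d`. -/
structure ErgSol (d : ℕ) (α : ℝ) (g : ℝ → ℝ) (V : (Fin d → ℝ) → ℝ)
    (u m : (Fin d → ℝ) → ℝ) (H : ℝ) : Prop where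
  per_u : ZPer d u
  per_m : ZPer d m
  reg_u : C2Hold d α u
  reg_m : C1Hold d α m
  m_nonneg : ∀ x, 0 ≤ m x
  m_mass : (∫ x in Icc (0 : Fin d → ℝ) 1, m x) = 1
  hj : ∀ x, (1 / 2) * gradSq d u x + V x = g (m x) + H
  fp : ∀ x, divUp d m u x = 0

/-! Positivity: at a zero of `m`, which is a minimum since `m ≥ 0`, both `m` and `Dm` vanish, hence
so does `div(m Du) = Dm · Du + m Δu`, and the Fokker–Planck equation would read `0 = ε`.
Mass: `div(m Du)` integrates to zero over the unit cube by the divergence theorem, because the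
flux `m Du` is periodic and its contributions through opposite faces cancel; integrating the
Fokker–Planck equation then gives `ε ∫ m = ε`. -/

section

variable {d : ℕ}

namespace ZPer

lemma add_single {f : (Fin d → ℝ) → ℝ} (hf : ZPer d f) (x : Fin d → ℝ) (i : Fin d) :
    f (x + Pi.single i 1) = f x := by
  convert hf x (Pi.single i 1) using 3
  funext j
  rcases eq_or_ne j i with rfl | hj <;> simp [*]

lemma fderiv_add_int {f : (Fin d → ℝ) → ℝ} (hf : ZPer d f) (hdf : Differentiable ℝ f)
    (x : Fin d → ℝ) (k : Fin d → ℤ) :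
    fderiv ℝ f (x + fun i => (k i : ℝ)) = fderiv ℝ f x := by
  set c : Fin d → ℝ := fun i => (k i : ℝ)
  have hshift : HasFDerivAt (fun y => f (y + c)) (fderiv ℝ f (x + c)) x := by
    simpa [Function.comp_def] using
      (hdf (x + c)).hasFDerivAt.comp x ((hasFDerivAt_id x).add_const c)
  rw [show (fun y => f (y + c)) = f from funext fun y => hf y k] at hshift
  exact hshift.fderiv.symm

lemma pd {f : (Fin d → ℝ) → ℝ} (hf : ZPer d f) (hdf : Differentiable ℝ f) (i : Fin d) :
    ZPer d (pd d i f) := by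
  intro x k
  simp only [_root_.pd, hf.fderiv_add_int hdf x k]

end ZPer

lemma contDiff_pd {u : (Fin d → ℝ) → ℝ} (hu : ContDiff ℝ 2 u) (i : Fin d) :
    ContDiff ℝ 1 (pd d i u) :=
  (hu.fderiv_right (by norm_num)).clm_apply contDiff_const

lemma continuous_divUp {u m : (Fin d → ℝ) → ℝ} (hu : ContDiff ℝ 2 u) (hm : ContDiff ℝ 1 m) :
    Continuous (divUp d m u) :=
  continuous_finsetSum _ fun i _ =>
    ((hm.mul (contDiff_pd hu i)).continuous_fderiv one_ne_zero).clm_apply continuous_const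

lemma divUp_eq_zero_of_eq_zero_of_nonneg {u m : (Fin d → ℝ) → ℝ} {x : Fin d → ℝ}
    (hu : ContDiff ℝ 2 u) (hm : ContDiff ℝ 1 m) (hm_nonneg : ∀ y, 0 ≤ m y) (hx : m x = 0) :
    divUp d m u x = 0 := by
  have hmin : IsLocalMin m x := Filter.Eventually.of_forall fun y => hx ▸ hm_nonneg y
  refine Finset.sum_eq_zero fun i _ => ?_
  change fderiv ℝ (fun y => m y * pd d i u y) x (Pi.single i 1) = 0
  rw [fderiv_fun_mul (hm.differentiable one_ne_zero x)
    ((contDiff_pd hu i).differentiable one_ne_zero x)]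
  simp [hx, hmin.fderiv_eq_zero]

lemma insertNth_one_eq_insertNth_zero_add_single {n : ℕ} (i : Fin (n + 1)) (x : Fin n → ℝ) :
    (i.insertNth (1 : ℝ) x : Fin (n + 1) → ℝ) = i.insertNth 0 x + Pi.single i 1 := by
  funext j
  rcases eq_or_ne j i with rfl | hj
  · simp
  · obtain ⟨j', rfl⟩ := Fin.exists_succAbove_eq hj
    simp [Fin.insertNth_apply_succAbove, Fin.succAbove_ne i j']

lemma integral_divUp_eq_zero {u m : (Fin d → ℝ) → ℝ}
    (hu : ContDiff ℝ 2 u) (hm : ContDiff ℝ 1 m) (hpu : ZPer d u) (hpm : ZPer d m) :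
    ∫ x in Icc (0 : Fin d → ℝ) 1, divUp d m u x = 0 := by
  cases d with
  | zero => simp [divUp]
  | succ n =>
    set flux : Fin (n + 1) → (Fin (n + 1) → ℝ) → ℝ := fun i y => m y * pd (n + 1) i u y
    have hflux : ∀ i, ContDiff ℝ 1 (flux i) := fun i => hm.mul (contDiff_pd hu i)
    have hperflux : ∀ i, ZPer (n + 1) (flux i) := fun i y k => by
      simp only [flux, hpm y k, hpu.pd (hu.differentiable (by norm_num)) i y k]
    rw [show divUp (n + 1) m u = fun x => ∑ i, fderiv ℝ (flux i) x (Pi.single i 1) from rfl,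
      integral_divergence_of_hasFDerivAt_off_countable' (a := 0) (b := 1) zero_le_one flux
        (fun i x => fderiv ℝ (flux i) x) ∅ countable_empty
        (fun i => (hflux i).continuous.continuousOn)
        (fun x _ i => ((hflux i).differentiable one_ne_zero x).hasFDerivAt)
        (continuous_divUp hu hm).integrableOn_Icc]
    refine Finset.sum_eq_zero fun i _ => ?_
    have hfaces : ∀ x : Fin n → ℝ, flux i (i.insertNth ((1 : Fin (n + 1) → ℝ) i) x) =
        flux i (i.insertNth ((0 : Fin (n + 1) → ℝ) i) x) := fun x => by
      simpa [insertNth_one_eq_insertNth_zero_add_single] using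
        (hperflux i).add_single (i.insertNth 0 x) i
    rw [setIntegral_congr_fun measurableSet_Icc fun x _ => hfaces x, sub_self]

lemma volume_real_unit_cube : volume.real (Icc (0 : Fin d → ℝ) 1) = 1 := by
  simp [measureReal_def, Real.volume_Icc_pi_toReal zero_le_one]

namespace DiscSol

variable {α ε : ℝ} {g : ℝ → ℝ} {V u m : (Fin d → ℝ) → ℝ}

lemma pos (hε : 0 < ε) (hsol : DiscSol d α g V ε u m) (x : Fin d → ℝ) : 0 < m x := by
  refine (hsol.m_nonneg x).lt_of_ne' fun hx => hε.ne ?_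
  have hdiv := divUp_eq_zero_of_eq_zero_of_nonneg hsol.reg_u.1 hsol.reg_m.1 hsol.m_nonneg hx
  simpa [hx, hdiv] using hsol.fp x

lemma integral_eq_one (hε : 0 < ε) (hsol : DiscSol d α g V ε u m) :
    ∫ x in Icc (0 : Fin d → ℝ) 1, m x = 1 := by
  have hu := hsol.reg_u.1
  have hm := hsol.reg_m.1
  have hmass : ε * ∫ x in Icc (0 : Fin d → ℝ) 1, m x = ε * 1 := calc
    ε * ∫ x in Icc (0 : Fin d → ℝ) 1, m x
        = ∫ x in Icc (0 : Fin d → ℝ) 1, (ε * m x - divUp d m u x) := by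
          rw [integral_sub ((hm.continuous.integrableOn_Icc).const_mul ε)
            (continuous_divUp hu hm).integrableOn_Icc,
            integral_divUp_eq_zero hu hm hsol.per_u hsol.per_m, integral_const_mul, sub_zero]
    _ = ∫ _ in Icc (0 : Fin d → ℝ) 1, ε := by simp only [hsol.fp]
    _ = ε * 1 := by rw [setIntegral_const, volume_real_unit_cube, smul_eq_mul, one_mul, mul_one]
  exact mul_left_cancel₀ hε.ne' hmass

end DiscSol

end

theorem stmt0 (d : ℕ) (α : ℝ)
    (g : ℝ → ℝ) (V : (Fin d → ℝ) → ℝ)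
    (ε : ℝ) (hε : 0 < ε) (u m : (Fin d → ℝ) → ℝ)
    (hsol : DiscSol d α g V ε u m) :
    (∀ x, 0 < m x) ∧ (∫ x in Icc (0 : Fin d → ℝ) 1, m x) = 1 :=
  ⟨hsol.pos hε, hsol.integral_eq_one hε⟩
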